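/- The proof system K^{∇•} is sound and strongly complete with respect to the class of all Kripke frames: (1) every formula derivable in K^{∇•} is true at every world of every Kripke model; and (2) every K^{∇•}-consistent set Γ of L(∇,•)-formulas is satisfiable, i.e. there exist a Kripke model M and a world s such that M,s ⊨ φ for every φ ∈ Γ. -/
import Mathlib


inductive Form : Type
  | atom : Nat → Form
  | neg : Form → Form
  | and : Form → Form → Form
  | nabla : Form → Form
  | bull : Form → Form

namespace Form
def imp (φ ψ : Form) : Form := neg (and φ (neg ψ))
def orf (φ ψ : Form) : Form := neg (and (neg φ) (neg ψ))
def ifff (φ ψ : Form) : Form := and (imp φ ψ) (imp ψ φ)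
def delta (φ : Form) : Form := neg (nabla φ)
def circ (φ : Form) : Form := neg (bull φ)
end Form

structure Model (W : Type) where
  R : W → W → Prop
  V : Nat → W → Prop

def sat {W : Type} (M : Model W) : W → Form → Prop
  | s, .atom n => M.V n s
  | s, .neg φ => ¬ sat M s φ
  | s, .and φ ψ => sat M s φ ∧ sat M s ψ
  | s, .nabla φ => ∃ t u, M.R s t ∧ M.R s u ∧ sat M t φ ∧ ¬ sat M u φ
  | s, .bull φ => sat M s φ ∧ ∃ t, M.R s t ∧ ¬ sat M t φ

/-- Boolean evaluation treating atoms, `∇φ` and `•φ` as propositional atoms;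
used to express "instance of a propositional tautology". -/
def evalT (v : Form → Bool) : Form → Bool
  | .neg φ => !(evalT v φ)
  | .and φ ψ => evalT v φ && evalT v ψ
  | φ => v φ

/-- `φ` is an instance of a propositional tautology. -/
def Taut (φ : Form) : Prop := ∀ v : Form → Bool, evalT v φ = true

/-- Derivability in the minimal system `K^{∇•}`. -/
inductive Prov : Form → Prop
  | a0 : ∀ φ, Taut φ → Prov φ
  | a1 : ∀ φ, Prov (Form.imp (.bull φ) φ)
  | a2 : ∀ φ, Prov (Form.ifff (.nabla φ) (.nabla (.neg φ)))
  | a3 : ∀ φ ψ, Prov (Form.imp (.and (.bull (Form.imp ψ φ)) φ) (.bull φ))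
  | a4 : ∀ φ ψ, Prov (Form.imp (.nabla (.and φ ψ)) (Form.orf (.nabla φ) (.nabla ψ)))
  | a5 : ∀ φ ψ, Prov (Form.imp (.bull (.and φ ψ)) (Form.orf (.bull φ) (.bull ψ)))
  | a6 : ∀ φ, Prov (Form.imp (.nabla φ) (Form.orf (.bull φ) (.bull (.neg φ))))
  | a7 : ∀ φ ψ χ, Prov (Form.imp (.and (.bull (Form.imp φ ψ)) (.bull (Form.imp (.neg φ) χ))) (.nabla φ))
  | r1 : ∀ φ, Prov φ → Prov (Form.delta φ)
  | r2 : ∀ φ, Prov φ → Prov (Form.circ φ)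
  | r3 : ∀ φ ψ, Prov (Form.ifff φ ψ) → Prov (Form.ifff (Form.delta φ) (Form.delta ψ))
  | r4 : ∀ φ ψ, Prov (Form.ifff φ ψ) → Prov (Form.ifff (Form.circ φ) (Form.circ ψ))
  | mp : ∀ φ ψ, Prov (Form.imp φ ψ) → Prov φ → Prov ψ

/-- `bigAnd [χ₁, …, χₙ] = χ₁ ∧ ⋯ ∧ χₙ` (for nonempty lists). -/
def bigAnd : List Form → Form
  | [] => Form.neg (Form.and (Form.atom 0) (Form.neg (Form.atom 0)))
  | [φ] => φ
  | φ :: ψ :: rest => Form.and φ (bigAnd (ψ :: rest))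

/-- `Γ` is `K^{∇•}`-consistent: no finite subset `{φ₁,…,φₙ}` (n ≥ 1) of `Γ` has
`¬(φ₁ ∧ ⋯ ∧ φₙ)` derivable. -/
def Consistent (Γ : Set Form) : Prop :=
  ¬ ∃ L : List Form, L ≠ [] ∧ (∀ φ ∈ L, φ ∈ Γ) ∧ Prov (.neg (bigAnd L))

open Form

lemma evalT_atom (v : Form → Bool) (n : Nat) : evalT v (atom n) = v (atom n) := rfl
lemma evalT_nabla (v : Form → Bool) (φ : Form) : evalT v (nabla φ) = v (nabla φ) := rfl
lemma evalT_bull (v : Form → Bool) (φ : Form) : evalT v (bull φ) = v (bull φ) := rfl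
lemma evalT_neg (v : Form → Bool) (φ : Form) : evalT v (neg φ) = !(evalT v φ) := rfl
lemma evalT_and (v : Form → Bool) (φ ψ : Form) : evalT v (and φ ψ) = (evalT v φ && evalT v ψ) := rfl

example (a b : Form) : Taut (imp (and a b) a) := by
  intro v
  simp only [imp, orf, ifff, delta, circ, evalT_neg, evalT_and]
  cases evalT v a <;> cases evalT v b <;> rfl

example (a b : Form) : Taut (imp (circ a) (imp (bull b) (and (circ a) (bull b)))) := by
  intro v
  simp only [imp, orf, ifff, delta, circ, evalT_neg, evalT_and, evalT_bull]
  cases v (bull a) <;> cases v (bull b) <;> rfl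
-- § Prov toolkit
lemma taut1 {φ : Form} (h : Taut φ) : Prov φ := Prov.a0 _ h
lemma pmp {a b : Form} (h : Prov (imp a b)) (ha : Prov a) : Prov b := Prov.mp _ _ h ha

lemma t_id (a : Form) : Prov (imp a a) := taut1 (by
  intro v; simp only [imp, evalT_neg, evalT_and]; cases evalT v a <;> rfl)

lemma imp_trans {a b c : Form} (h1 : Prov (imp a b)) (h2 : Prov (imp b c)) :
    Prov (imp a c) := by
  have t : Prov (imp (imp a b) (imp (imp b c) (imp a c))) := taut1 (by
    intro v; simp only [imp, evalT_neg, evalT_and]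
    cases evalT v a <;> cases evalT v b <;> cases evalT v c <;> rfl)
  exact pmp (pmp t h1) h2

lemma t_andl (a b : Form) : Prov (imp (and a b) a) := taut1 (by
  intro v; simp only [imp, evalT_neg, evalT_and]; cases evalT v a <;> cases evalT v b <;> rfl)

lemma t_andr (a b : Form) : Prov (imp (and a b) b) := taut1 (by
  intro v; simp only [imp, evalT_neg, evalT_and]; cases evalT v a <;> cases evalT v b <;> rfl)

lemma t_nn_intro (a : Form) : Prov (imp a (neg (neg a))) := taut1 (by
  intro v; simp only [imp, evalT_neg, evalT_and]; cases evalT v a <;> rfl)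

lemma t_nn_elim (a : Form) : Prov (imp (neg (neg a)) a) := taut1 (by
  intro v; simp only [imp, evalT_neg, evalT_and]; cases evalT v a <;> rfl)

lemma iff_mp {a b : Form} (h : Prov (ifff a b)) : Prov (imp a b) :=
  pmp (t_andl _ _) h

lemma iff_mpr {a b : Form} (h : Prov (ifff a b)) : Prov (imp b a) :=
  pmp (t_andr _ _) h

lemma iff_neg {a b : Form} (h : Prov (ifff a b)) : Prov (ifff (neg a) (neg b)) := by
  have t : Prov (imp (ifff a b) (ifff (neg a) (neg b))) := taut1 (by
    intro v; simp only [imp, ifff, evalT_neg, evalT_and]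
    cases evalT v a <;> cases evalT v b <;> rfl)
  exact pmp t h

lemma iff_symm {a b : Form} (h : Prov (ifff a b)) : Prov (ifff b a) := by
  have t : Prov (imp (ifff a b) (ifff b a)) := taut1 (by
    intro v; simp only [imp, ifff, evalT_neg, evalT_and]
    cases evalT v a <;> cases evalT v b <;> rfl)
  exact pmp t h

/-- from `⊢ a ↔ b` infer `⊢ •a ↔ •b` -/
lemma bull_iff {a b : Form} (h : Prov (ifff a b)) : Prov (ifff (bull a) (bull b)) := by
  have h1 : Prov (ifff (circ a) (circ b)) := Prov.r4 _ _ h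
  have t : Prov (imp (ifff (circ a) (circ b)) (ifff (bull a) (bull b))) := taut1 (by
    intro v; simp only [imp, ifff, circ, evalT_neg, evalT_and, evalT_bull]
    cases v (bull a) <;> cases v (bull b) <;> rfl)
  exact pmp t h1

/-- from `⊢ a ↔ b` infer `⊢ ∇a ↔ ∇b` -/
lemma nabla_iff {a b : Form} (h : Prov (ifff a b)) : Prov (ifff (nabla a) (nabla b)) := by
  have h1 : Prov (ifff (delta a) (delta b)) := Prov.r3 _ _ h
  have t : Prov (imp (ifff (delta a) (delta b)) (ifff (nabla a) (nabla b))) := taut1 (by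
    intro v; simp only [imp, ifff, delta, evalT_neg, evalT_and, evalT_nabla]
    cases v (nabla a) <;> cases v (nabla b) <;> rfl)
  exact pmp t h1

-- § consistency, MCS
def ConS (Γ : Set Form) : Prop :=
  ¬ ∃ L : List Form, (∀ φ ∈ L, φ ∈ Γ) ∧ Prov (.neg (bigAnd L))

def MCS (s : Set Form) : Prop := ConS s ∧ ∀ φ, φ ∈ s ∨ Form.neg φ ∈ s

namespace MCS

variable {s : Set Form} (h : MCS s)

include h

lemma not_mem {φ : Form} (hφ : φ ∈ s) : neg φ ∉ s := by
  intro hn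
  refine h.1 ⟨[φ, neg φ], fun ψ hψ => ?_, t_id φ⟩
  simp only [List.mem_cons, List.not_mem_nil, or_false] at hψ
  rcases hψ with rfl | rfl <;> assumption

lemma not_iff {φ : Form} : neg φ ∈ s ↔ φ ∉ s := by
  constructor
  · intro hn hφ; exact h.not_mem hφ hn
  · intro hφ; rcases h.2 φ with h' | h'
    · exact absurd h' hφ
    · exact h'

lemma mp {φ ψ : Form} (hφ : φ ∈ s) (hp : Prov (imp φ ψ)) : ψ ∈ s := by
  by_contra hψ
  have hn : neg ψ ∈ s := h.not_iff.2 hψ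
  refine h.1 ⟨[φ, neg ψ], fun χ hχ => ?_, hp⟩
  simp only [List.mem_cons, List.not_mem_nil, or_false] at hχ
  rcases hχ with rfl | rfl <;> assumption

lemma thm {φ : Form} (hp : Prov φ) : φ ∈ s := by
  by_contra hφ
  have hn : neg φ ∈ s := h.not_iff.2 hφ
  refine h.1 ⟨[neg φ], fun χ hχ => ?_, pmp (t_nn_intro φ) hp⟩
  simp only [List.mem_cons, List.not_mem_nil, or_false] at hχ
  subst hχ; assumption

lemma mem_of_not_not {φ : Form} (hφ : φ ∈ s) : neg (neg φ) ∈ s :=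
  h.mp hφ (t_nn_intro φ)

lemma mp_mem {φ ψ : Form} (hφ : φ ∈ s) (hi : imp φ ψ ∈ s) : ψ ∈ s := by
  by_contra hψ
  have hn : neg ψ ∈ s := h.not_iff.2 hψ
  have t : Prov (neg (bigAnd [φ, imp φ ψ, neg ψ])) := taut1 (by
    intro v; simp only [bigAnd, imp, evalT_neg, evalT_and]
    cases evalT v φ <;> cases evalT v ψ <;> rfl)
  refine h.1 ⟨[φ, imp φ ψ, neg ψ], fun χ hχ => ?_, t⟩
  simp only [List.mem_cons, List.not_mem_nil, or_false] at hχ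
  rcases hχ with rfl | rfl | rfl <;> assumption

lemma and_intro {φ ψ : Form} (hφ : φ ∈ s) (hψ : ψ ∈ s) : and φ ψ ∈ s := by
  have t : Prov (imp φ (imp ψ (and φ ψ))) := taut1 (by
    intro v; simp only [imp, evalT_neg, evalT_and]
    cases evalT v φ <;> cases evalT v ψ <;> rfl)
  exact h.mp_mem hψ (h.mp hφ t)

lemma and_left {φ ψ : Form} (hφ : and φ ψ ∈ s) : φ ∈ s := h.mp hφ (t_andl _ _)
lemma and_right {φ ψ : Form} (hφ : and φ ψ ∈ s) : ψ ∈ s := h.mp hφ (t_andr _ _)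

lemma or_elim {φ ψ : Form} (hφ : orf φ ψ ∈ s) : φ ∈ s ∨ ψ ∈ s := by
  by_contra hc
  push_neg at hc
  have h1 : neg φ ∈ s := h.not_iff.2 hc.1
  have h2 : neg ψ ∈ s := h.not_iff.2 hc.2
  have h3 : and (neg φ) (neg ψ) ∈ s := h.and_intro h1 h2
  exact h.not_mem h3 hφ

lemma iff_mem {φ ψ : Form} (hp : Prov (ifff φ ψ)) : φ ∈ s ↔ ψ ∈ s :=
  ⟨fun hφ => h.mp hφ (iff_mp hp), fun hψ => h.mp hψ (iff_mpr hp)⟩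

lemma mp2 {φ ψ χ : Form} (hp : Prov (imp (and φ ψ) χ)) (hφ : φ ∈ s) (hψ : ψ ∈ s) :
    χ ∈ s := h.mp (h.and_intro hφ hψ) hp

end MCS

-- § bigAnd
lemma bigAnd_cons (a : Form) (l : List Form) (hl : l ≠ []) :
    bigAnd (a :: l) = and a (bigAnd l) := by
  cases l with
  | nil => exact absurd rfl hl
  | cons b r => rfl

lemma prov_bigAnd_nil : Prov (bigAnd []) := taut1 (by
  intro v; simp only [bigAnd, evalT_neg, evalT_and, evalT_atom]
  cases v (atom 0) <;> rfl)

lemma bigAnd_mem {L : List Form} {ψ : Form} (hψ : ψ ∈ L) : Prov (imp (bigAnd L) ψ) := by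
  induction L with
  | nil => simp at hψ
  | cons a l ih =>
    cases l with
    | nil =>
      rcases List.mem_cons.1 hψ with rfl | hmem
      · exact t_id _
      · simp at hmem
    | cons b r =>
      rw [bigAnd_cons a (b :: r) (by simp)]
      rcases List.mem_cons.1 hψ with rfl | hmem
      · exact t_andl _ _
      · exact imp_trans (t_andr _ _) (ih hmem)

lemma bigAnd_intro {L : List Form} {χ : Form} (hs : ∀ ψ ∈ L, Prov (imp χ ψ)) :
    Prov (imp χ (bigAnd L)) := by
  induction L with
  | nil =>
    have t : Prov (imp χ (bigAnd [])) := taut1 (by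
      intro v; simp only [bigAnd, imp, evalT_neg, evalT_and, evalT_atom]
      cases evalT v χ <;> cases v (atom 0) <;> rfl)
    exact t
  | cons a l ih =>
    cases l with
    | nil => exact hs a (by simp)
    | cons b r =>
      rw [bigAnd_cons a (b :: r) (by simp)]
      have h1 : Prov (imp χ a) := hs a (by simp)
      have h2 : Prov (imp χ (bigAnd (b :: r))) := ih (fun ψ hψ => hs ψ (by simp [hψ]))
      have t : Prov (imp (imp χ a) (imp (imp χ (bigAnd (b :: r)))
          (imp χ (and a (bigAnd (b :: r)))))) := taut1 (by
        intro v; simp only [imp, evalT_neg, evalT_and]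
        cases evalT v χ <;> cases evalT v a <;> cases evalT v (bigAnd (b :: r)) <;> rfl)
      exact pmp (pmp t h1) h2

lemma extract {A : Set Form} {ξ : Form} {L : List Form}
    (hL : ∀ ψ ∈ L, ψ ∈ A ∨ ψ = ξ) (hP : Prov (neg (bigAnd L))) :
    ∃ L' : List Form, (∀ ψ ∈ L', ψ ∈ A) ∧ Prov (imp (bigAnd L') (neg ξ)) := by
  classical
  refine ⟨L.filter (fun ψ => decide (ψ ∈ A)), ?_, ?_⟩
  · intro ψ hψ
    have := List.of_mem_filter hψ
    simpa using this
  · set X := bigAnd (L.filter (fun ψ => decide (ψ ∈ A))) with hX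
    have h1 : Prov (imp (and X ξ) (bigAnd L)) := by
      apply bigAnd_intro
      intro ψ hψ
      rcases hL ψ hψ with hA | rfl
      · have hmem : ψ ∈ L.filter (fun ψ => decide (ψ ∈ A)) :=
          List.mem_filter.2 ⟨hψ, by simpa⟩
        exact imp_trans (t_andl _ _) (bigAnd_mem hmem)
      · exact t_andr _ _
    have t : Prov (imp (imp (and X ξ) (bigAnd L))
        (imp (neg (bigAnd L)) (imp X (neg ξ)))) := taut1 (by
      intro v; simp only [imp, evalT_neg, evalT_and]
      cases evalT v X <;> cases evalT v ξ <;> cases evalT v (bigAnd L) <;> rfl)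
    exact pmp (pmp t h1) hP

lemma bigAnd_subset {L L' : List Form} (hsub : ∀ ψ ∈ L', ψ ∈ L) :
    Prov (imp (bigAnd L) (bigAnd L')) :=
  bigAnd_intro (fun ψ hψ => bigAnd_mem (hsub ψ hψ))

-- § Lindenbaum
lemma con_insert {Γ : Set Form} {φ : Form} (h : ConS Γ)
    (hn : ¬ ConS (insert φ Γ)) :
    ∃ L', (∀ ψ ∈ L', ψ ∈ Γ) ∧ Prov (imp (bigAnd L') (neg φ)) := by
  rw [ConS, not_not] at hn
  obtain ⟨L, hLmem, hLP⟩ := hn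
  exact extract (fun ψ hψ => by rcases hLmem ψ hψ with h' | h' <;> simp_all) hLP

lemma lindenbaum {Γ : Set Form} (h : ConS Γ) : ∃ s, Γ ⊆ s ∧ MCS s := by
  obtain ⟨m, hΓm, hmax⟩ := zorn_subset_nonempty {Δ : Set Form | ConS Δ}
    (fun c hc hchain hne => by
      refine ⟨⋃₀ c, ?_, fun t ht => Set.subset_sUnion_of_mem ht⟩
      rintro ⟨L, hLmem, hLP⟩
      have : ∃ Δ ∈ c, ∀ ψ ∈ L, ψ ∈ Δ := by
        clear hLP
        induction L with
        | nil => obtain ⟨Δ, hΔ⟩ := hne; exact ⟨Δ, hΔ, by simp⟩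
        | cons a l ih =>
          obtain ⟨Δ₁, hΔ₁c, hΔ₁⟩ := ih (fun ψ hψ => hLmem ψ (by simp [hψ]))
          obtain ⟨Δ₂, hΔ₂c, hΔ₂⟩ := hLmem a (by simp)
          rcases hchain.total hΔ₁c hΔ₂c with hle | hle
          · exact ⟨Δ₂, hΔ₂c, fun ψ hψ => by
              rcases List.mem_cons.1 hψ with rfl | h'
              · exact hΔ₂
              · exact hle (hΔ₁ ψ h')⟩
          · exact ⟨Δ₁, hΔ₁c, fun ψ hψ => by
              rcases List.mem_cons.1 hψ with rfl | h'
              · exact hle hΔ₂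
              · exact hΔ₁ ψ h'⟩
      obtain ⟨Δ, hΔc, hΔ⟩ := this
      exact hc hΔc ⟨L, hΔ, hLP⟩) Γ h
  refine ⟨m, hΓm, hmax.prop, ?_⟩
  intro φ
  by_contra hc
  push_neg at hc
  have h1 : ¬ ConS (insert φ m) := by
    intro hcon
    have : insert φ m = m := (hmax.eq_of_subset hcon (Set.subset_insert _ _)).symm
    exact hc.1 (this ▸ Set.mem_insert φ m)
  have h2 : ¬ ConS (insert (neg φ) m) := by
    intro hcon
    have : insert (neg φ) m = m := (hmax.eq_of_subset hcon (Set.subset_insert _ _)).symm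
    exact hc.2 (this ▸ Set.mem_insert _ m)
  obtain ⟨L₁, hL₁m, hL₁⟩ := con_insert hmax.prop h1
  obtain ⟨L₂, hL₂m, hL₂⟩ := con_insert hmax.prop h2
  have hsub1 : Prov (imp (bigAnd (L₁ ++ L₂)) (bigAnd L₁)) :=
    bigAnd_subset (fun ψ hψ => List.mem_append_left _ hψ)
  have hsub2 : Prov (imp (bigAnd (L₁ ++ L₂)) (bigAnd L₂)) :=
    bigAnd_subset (fun ψ hψ => List.mem_append_right _ hψ)
  have hA : Prov (imp (bigAnd (L₁ ++ L₂)) (neg φ)) := imp_trans hsub1 hL₁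
  have hB : Prov (imp (bigAnd (L₁ ++ L₂)) (neg (neg φ))) := imp_trans hsub2 hL₂
  have t : Prov (imp (imp (bigAnd (L₁ ++ L₂)) (neg φ))
      (imp (imp (bigAnd (L₁ ++ L₂)) (neg (neg φ))) (neg (bigAnd (L₁ ++ L₂))))) := taut1 (by
    intro v; simp only [imp, evalT_neg, evalT_and]
    cases evalT v (bigAnd (L₁ ++ L₂)) <;> cases evalT v φ <;> rfl)
  exact hmax.prop ⟨L₁ ++ L₂, fun ψ hψ => by
    rcases List.mem_append.1 hψ with h' | h'
    · exact hL₁m ψ h'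
    · exact hL₂m ψ h', pmp (pmp t hA) hB⟩
-- § modal toolkit at the MCS level
namespace MCS

variable {s : Set Form} (h : MCS s)

include h

lemma ax1 {φ : Form} (hb : bull φ ∈ s) : φ ∈ s := h.mp hb (Prov.a1 φ)

lemma ax2 {φ : Form} : nabla φ ∈ s ↔ nabla (neg φ) ∈ s := h.iff_mem (Prov.a2 φ)

lemma ax3 {φ ψ : Form} (hb : bull (imp ψ φ) ∈ s) (hφ : φ ∈ s) : bull φ ∈ s :=
  h.mp2 (Prov.a3 φ ψ) hb hφ

lemma ax4 {φ ψ : Form} (hn : nabla (and φ ψ) ∈ s) : nabla φ ∈ s ∨ nabla ψ ∈ s :=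
  h.or_elim (h.mp hn (Prov.a4 φ ψ))

lemma ax5 {φ ψ : Form} (hb : bull (and φ ψ) ∈ s) : bull φ ∈ s ∨ bull ψ ∈ s :=
  h.or_elim (h.mp hb (Prov.a5 φ ψ))

lemma ax6 {φ : Form} (hn : nabla φ ∈ s) : bull φ ∈ s ∨ bull (neg φ) ∈ s :=
  h.or_elim (h.mp hn (Prov.a6 φ))

lemma ax7 {φ ψ χ : Form} (h1 : bull (imp φ ψ) ∈ s) (h2 : bull (imp (neg φ) χ) ∈ s) :
    nabla φ ∈ s := h.mp2 (Prov.a7 φ ψ χ) h1 h2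

lemma bull_congr {a b : Form} (hp : Prov (ifff a b)) : bull a ∈ s ↔ bull b ∈ s :=
  h.iff_mem (bull_iff hp)

lemma nabla_congr {a b : Form} (hp : Prov (ifff a b)) : nabla a ∈ s ↔ nabla b ∈ s :=
  h.iff_mem (nabla_iff hp)

/-- T1: if `δ ∈ s`, `∘δ ∈ s` and `⊢ δ → η` then `∘η ∈ s`. -/
lemma circ_mono {δ η : Form} (hδ : δ ∈ s) (hc : bull δ ∉ s) (himp : Prov (imp δ η)) :
    bull η ∉ s := by
  intro hbη
  have t : Prov (imp (imp δ η) (ifff η (imp (neg η) δ))) := taut1 (by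
    intro v; simp only [imp, ifff, evalT_neg, evalT_and]
    cases evalT v δ <;> cases evalT v η <;> rfl)
  have hiff : Prov (ifff η (imp (neg η) δ)) := pmp t himp
  have h1 : bull (imp (neg η) δ) ∈ s := (h.bull_congr hiff).1 hbη
  exact hc (h.ax3 h1 hδ)

/-- T2: if `δ ∈ s` and `∘δ ∈ s` then `Δδ ∈ s`. -/
lemma delta_of_circ {δ : Form} (hδ : δ ∈ s) (hc : bull δ ∉ s) : nabla δ ∉ s := by
  intro hn
  rcases h.ax6 hn with hb | hb
  · exact hc hb
  · exact h.not_mem hδ (h.ax1 hb)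

/-- Δ is closed under disjunction (inside an MCS). -/
lemma delta_or {a b : Form} (h1 : nabla a ∉ s) (h2 : nabla b ∉ s) :
    nabla (orf a b) ∉ s := by
  intro hn
  have hn' : nabla (and (neg a) (neg b)) ∈ s := (h.ax2 (φ := and (neg a) (neg b))).2 hn
  rcases h.ax4 hn' with h' | h'
  · exact h1 ((h.ax2).2 h')
  · exact h2 ((h.ax2).2 h')

/-- T4: if `Δχ ∈ s` and `•¬χ ∈ s` then for every `γ`, `∘(¬χ → γ) ∈ s`. -/
lemma circ_of_delta_bullneg {χ : Form} (hΔ : nabla χ ∉ s) (hb : bull (neg χ) ∈ s)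
    (γ : Form) : bull (imp (neg χ) γ) ∉ s := by
  intro hbγ
  have t : Prov (ifff (neg χ) (imp χ (neg χ))) := taut1 (by
    intro v; simp only [imp, ifff, evalT_neg, evalT_and]
    cases evalT v χ <;> rfl)
  have h1 : bull (imp χ (neg χ)) ∈ s := (h.bull_congr t).1 hb
  exact hΔ (h.ax7 h1 hbγ)

end MCS

/-- `φ` holds at every canonical successor of `s`. -/
def BoxP (s : Set Form) (φ : Form) : Prop :=
  (φ ∈ s ∧ Form.bull φ ∉ s) ∨ (Form.nabla φ ∉ s ∧ Form.bull (Form.neg φ) ∈ s)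

namespace MCS

variable {s : Set Form} (h : MCS s)

include h

lemma boxP_congr {a b : Form} (hB : BoxP s a) (hp : Prov (ifff a b)) : BoxP s b := by
  rcases hB with ⟨h1, h2⟩ | ⟨h1, h2⟩
  · exact Or.inl ⟨(h.iff_mem hp).1 h1, fun hb => h2 ((h.bull_congr hp).2 hb)⟩
  · exact Or.inr ⟨fun hn => h1 ((h.nabla_congr hp).2 hn),
      (h.bull_congr (iff_neg hp)).1 h2⟩

lemma boxP_thm {χ : Form} (hp : Prov χ) : BoxP s χ :=
  Or.inl ⟨h.thm hp, h.not_iff.1 (h.thm (Prov.r2 χ hp))⟩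

lemma boxP_and {a b : Form} (hA : BoxP s a) (hB : BoxP s b) : BoxP s (and a b) := by
  -- we first handle the case where the second conjunct is of the second kind
  have mixed : ∀ a b : Form, a ∈ s → bull a ∉ s → nabla b ∉ s → bull (neg b) ∈ s →
      BoxP s (and a b) := by
    intro a b ha hca hnb hbb
    have hnegb : neg b ∈ s := h.ax1 hbb
    have hna : nabla a ∉ s := h.delta_of_circ ha hca
    refine Or.inr ⟨?_, ?_⟩
    · intro hn; rcases h.ax4 hn with h' | h'
      · exact hna h'
      · exact hnb h'
    · by_contra hcd
      have hδ : neg (and a b) ∈ s := h.mp hnegb (taut1 (by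
        intro v; simp only [imp, evalT_neg, evalT_and]
        cases evalT v a <;> cases evalT v b <;> rfl))
      have hη : and a (neg (and a b)) ∈ s := h.and_intro ha hδ
      have hcη : bull (and a (neg (and a b))) ∉ s := by
        intro hb'
        rcases h.ax5 hb' with h' | h'
        · exact hca h'
        · exact hcd h'
      have : bull (neg b) ∉ s := h.circ_mono hη hcη (taut1 (by
        intro v; simp only [imp, evalT_neg, evalT_and]
        cases evalT v a <;> cases evalT v b <;> rfl))
      exact this hbb
  rcases hA with ⟨ha1, ha2⟩ | ⟨ha1, ha2⟩
  · rcases hB with ⟨hb1, hb2⟩ | ⟨hb1, hb2⟩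
    · refine Or.inl ⟨h.and_intro ha1 hb1, ?_⟩
      intro hb'
      rcases h.ax5 hb' with h' | h'
      · exact ha2 h'
      · exact hb2 h'
    · exact mixed a b ha1 ha2 hb1 hb2
  · rcases hB with ⟨hb1, hb2⟩ | ⟨hb1, hb2⟩
    · have hcomm : Prov (ifff (and b a) (and a b)) := taut1 (by
        intro v; simp only [ifff, imp, evalT_neg, evalT_and]
        cases evalT v a <;> cases evalT v b <;> rfl)
      exact h.boxP_congr (mixed b a hb1 hb2 ha1 ha2) hcomm
    · -- both of the second kind
      have hnega : neg a ∈ s := h.ax1 ha2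
      refine Or.inr ⟨?_, ?_⟩
      · intro hn; rcases h.ax4 hn with h' | h'
        · exact ha1 h'
        · exact hb1 h'
      · by_contra hcd
        have hδ : neg (and a b) ∈ s := h.mp hnega (taut1 (by
          intro v; simp only [imp, evalT_neg, evalT_and]
          cases evalT v a <;> cases evalT v b <;> rfl))
        have hT4 : bull (imp (neg b) (neg a)) ∉ s := h.circ_of_delta_bullneg hb1 hb2 (neg a)
        have hcη : bull (and (imp (neg b) (neg a)) (neg (and a b))) ∉ s := by
          intro hb'
          rcases h.ax5 hb' with h' | h'
          · exact hT4 h'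
          · exact hcd h'
        have hiff : Prov (ifff (neg a) (and (imp (neg b) (neg a)) (neg (and a b)))) :=
          taut1 (by
            intro v; simp only [ifff, imp, evalT_neg, evalT_and]
            cases evalT v a <;> cases evalT v b <;> rfl)
        exact hcη ((h.bull_congr hiff).1 ha2)

/-- The master lemma: if `Box` holds of `χ` and `⊢ χ → φ`, then `Δφ ∈ s`,
and moreover `∘φ ∈ s` whenever `φ ∈ s`. -/
lemma boxP_main {χ φ : Form} (hB : BoxP s χ) (himp : Prov (imp χ φ)) :
    nabla φ ∉ s ∧ (φ ∈ s → bull φ ∉ s) := by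
  rcases hB with ⟨h1, h2⟩ | ⟨h1, h2⟩
  · have hφ : φ ∈ s := h.mp h1 himp
    have hc : bull φ ∉ s := h.circ_mono h1 h2 himp
    exact ⟨h.delta_of_circ hφ hc, fun _ => hc⟩
  · by_cases hφ : φ ∈ s
    · have hT4 : bull (imp (neg χ) φ) ∉ s := h.circ_of_delta_bullneg h1 h2 φ
      have t : Prov (imp (imp χ φ) (ifff φ (imp (neg χ) φ))) := taut1 (by
        intro v; simp only [imp, ifff, evalT_neg, evalT_and]
        cases evalT v χ <;> cases evalT v φ <;> rfl)
      have hiff : Prov (ifff φ (imp (neg χ) φ)) := pmp t himp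
      have hc : bull φ ∉ s := fun hb => hT4 ((h.bull_congr hiff).1 hb)
      exact ⟨h.delta_of_circ hφ hc, fun _ => hc⟩
    · have hnφ : neg φ ∈ s := h.not_iff.2 hφ
      have hT4 : bull (imp (neg χ) (neg φ)) ∉ s := h.circ_of_delta_bullneg h1 h2 (neg φ)
      have hη : imp (neg χ) (neg φ) ∈ s := h.mp hnφ (taut1 (by
        intro v; simp only [imp, evalT_neg, evalT_and]
        cases evalT v χ <;> cases evalT v φ <;> rfl))
      have hnη : nabla (imp (neg χ) (neg φ)) ∉ s := h.delta_of_circ hη hT4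
      have hnη' : nabla (neg (imp (neg χ) (neg φ))) ∉ s := fun hn => hnη (h.ax2.2 hn)
      have hnor : nabla (orf (neg (imp (neg χ) (neg φ))) χ) ∉ s := h.delta_or hnη' h1
      have t : Prov (imp (imp χ φ) (ifff (orf (neg (imp (neg χ) (neg φ))) χ) φ)) :=
        taut1 (by
          intro v; simp only [imp, orf, ifff, evalT_neg, evalT_and]
          cases evalT v χ <;> cases evalT v φ <;> rfl)
      have hiff : Prov (ifff (orf (neg (imp (neg χ) (neg φ))) χ) φ) := pmp t himp
      exact ⟨fun hn => hnor ((h.nabla_congr hiff).2 hn), fun hφ' => absurd hφ' hφ⟩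

end MCS

lemma boxP_bigAnd {s : Set Form} (h : MCS s) {L : List Form}
    (hL : ∀ ψ ∈ L, BoxP s ψ) : BoxP s (bigAnd L) := by
  induction L with
  | nil => exact h.boxP_thm prov_bigAnd_nil
  | cons a l ih =>
    cases l with
    | nil => exact hL a (by simp)
    | cons b r =>
      rw [bigAnd_cons a (b :: r) (by simp)]
      exact h.boxP_and (hL a (by simp)) (ih (fun ψ hψ => hL ψ (by simp [hψ])))
-- § successor existence
def boxSet (s : Set Form) : Set Form := {ψ | BoxP s ψ}

lemma box_insert_con {s : Set Form} (h : MCS s) {ξ : Form}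
    (H : ∀ L' : List Form, (∀ ψ ∈ L', BoxP s ψ) → Prov (imp (bigAnd L') (neg ξ)) → False) :
    ConS (insert ξ (boxSet s)) := by
  rintro ⟨L, hLmem, hLP⟩
  obtain ⟨L', hL'mem, hL'P⟩ := extract (A := boxSet s) (ξ := ξ)
    (fun ψ hψ => by rcases hLmem ψ hψ with h' | h' <;> simp_all [boxSet]) hLP
  exact H L' hL'mem hL'P

lemma exists_succ {s : Set Form} (h : MCS s) {ξ : Form}
    (hcon : ConS (insert ξ (boxSet s))) :
    ∃ t : Set Form, MCS t ∧ (∀ ψ, BoxP s ψ → ψ ∈ t) ∧ ξ ∈ t := by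
  obtain ⟨t, hsub, ht⟩ := lindenbaum hcon
  exact ⟨t, ht, fun ψ hψ => hsub (Set.mem_insert_of_mem _ hψ),
    hsub (Set.mem_insert _ _)⟩

lemma succ_of_bull {s : Set Form} (h : MCS s) {φ : Form} (hb : bull φ ∈ s) :
    ∃ t : Set Form, MCS t ∧ (∀ ψ, BoxP s ψ → ψ ∈ t) ∧ neg φ ∈ t := by
  refine exists_succ h (box_insert_con h ?_)
  intro L' hL' hP
  have hmain := h.boxP_main (boxP_bigAnd h hL') hP
  have hφ : φ ∈ s := h.ax1 hb
  have hnn : neg (neg φ) ∈ s := h.mem_of_not_not hφ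
  have hbnn : bull (neg (neg φ)) ∈ s := (h.bull_congr (taut1 (by
    intro v; simp only [ifff, imp, evalT_neg, evalT_and]
    cases evalT v φ <;> rfl) : Prov (ifff φ (neg (neg φ))))).1 hb
  exact hmain.2 hnn hbnn

lemma succ_of_nabla_pos {s : Set Form} (h : MCS s) {φ : Form} (hn : nabla φ ∈ s) :
    ∃ t : Set Form, MCS t ∧ (∀ ψ, BoxP s ψ → ψ ∈ t) ∧ φ ∈ t := by
  refine exists_succ h (box_insert_con h ?_)
  intro L' hL' hP
  have hmain := h.boxP_main (boxP_bigAnd h hL') hP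
  exact hmain.1 (h.ax2.1 hn)

lemma succ_of_nabla_neg {s : Set Form} (h : MCS s) {φ : Form} (hn : nabla φ ∈ s) :
    ∃ t : Set Form, MCS t ∧ (∀ ψ, BoxP s ψ → ψ ∈ t) ∧ neg φ ∈ t := by
  refine exists_succ h (box_insert_con h ?_)
  intro L' hL' hP
  have hmain := h.boxP_main (boxP_bigAnd h hL') hP
  have hnn : nabla (neg (neg φ)) ∈ s := (h.nabla_congr (taut1 (by
    intro v; simp only [ifff, imp, evalT_neg, evalT_and]
    cases evalT v φ <;> rfl) : Prov (ifff φ (neg (neg φ))))).1 hn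
  exact hmain.1 hnn

-- § canonical model
def CanW : Type := {m : Set Form // MCS m}

def canM : Model CanW where
  R s t := ∀ φ, BoxP s.1 φ → φ ∈ t.1
  V n s := Form.atom n ∈ s.1

lemma truth_lemma : ∀ (φ : Form) (s : CanW), sat canM s φ ↔ φ ∈ s.1 := by
  intro φ
  induction φ with
  | atom n => intro s; exact Iff.rfl
  | neg φ ih =>
    intro s
    have := s.2.not_iff (φ := φ)
    simp only [sat, ih s]
    exact ⟨fun h' => this.2 h', fun h' h'' => (this.1 h') h''⟩
  | and φ ψ ih1 ih2 =>
    intro s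
    simp only [sat, ih1 s, ih2 s]
    exact ⟨fun ⟨h1, h2⟩ => s.2.and_intro h1 h2, fun h' => ⟨s.2.and_left h', s.2.and_right h'⟩⟩
  | nabla φ ih =>
    intro s
    simp only [sat]
    constructor
    · rintro ⟨t, u, hRt, hRu, hst, hsu⟩
      have hφt : φ ∈ t.1 := (ih t).1 hst
      have hφu : φ ∉ u.1 := fun h' => hsu ((ih u).2 h')
      by_contra hΔ
      rcases s.2.2 φ with hφ | hφ
      · by_cases hb : bull φ ∈ s.1
        · have hB : BoxP s.1 (neg φ) := Or.inr ⟨fun hn => hΔ (s.2.ax2.2 hn),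
            (s.2.bull_congr (taut1 (by
              intro v; simp only [ifff, imp, evalT_neg, evalT_and]
              cases evalT v φ <;> rfl) : Prov (ifff φ (neg (neg φ))))).1 hb⟩
          exact (t.2.not_iff.1 (hRt _ hB)) hφt
        · exact hφu (hRu _ (Or.inl ⟨hφ, hb⟩))
      · by_cases hb : bull (neg φ) ∈ s.1
        · exact hφu (hRu _ (Or.inr ⟨hΔ, hb⟩))
        · exact (t.2.not_iff.1 (hRt _ (Or.inl ⟨hφ, hb⟩))) hφt
    · intro hn
      obtain ⟨t, ht, hsubt, hφt⟩ := succ_of_nabla_pos s.2 hn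
      obtain ⟨u, hu, hsubu, hφu⟩ := succ_of_nabla_neg s.2 hn
      refine ⟨⟨t, ht⟩, ⟨u, hu⟩, hsubt, hsubu, (ih ⟨t, ht⟩).2 hφt, ?_⟩
      intro hsat
      exact (hu.not_iff.1 hφu) ((ih ⟨u, hu⟩).1 hsat)
  | bull φ ih =>
    intro s
    simp only [sat]
    constructor
    · rintro ⟨hsφ, t, hRt, hst⟩
      have hφs : φ ∈ s.1 := (ih s).1 hsφ
      have hφt : φ ∉ t.1 := fun h' => hst ((ih t).2 h')
      by_contra hb
      exact hφt (hRt _ (Or.inl ⟨hφs, hb⟩))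
    · intro hb
      obtain ⟨t, ht, hsubt, hφt⟩ := succ_of_bull s.2 hb
      refine ⟨(ih s).2 (s.2.ax1 hb), ⟨t, ht⟩, hsubt, ?_⟩
      intro hsat
      exact (ht.not_iff.1 hφt) ((ih ⟨t, ht⟩).1 hsat)
-- § soundness
section Soundness

variable {W : Type} {M : Model W}

lemma sat_neg {s : W} {a : Form} : sat M s (neg a) ↔ ¬ sat M s a := Iff.rfl
lemma sat_and {s : W} {a b : Form} : sat M s (and a b) ↔ (sat M s a ∧ sat M s b) := Iff.rfl

lemma sat_imp {s : W} {a b : Form} : sat M s (imp a b) ↔ (sat M s a → sat M s b) := by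
  simp only [imp, sat_neg, sat_and]; tauto

lemma sat_orf {s : W} {a b : Form} : sat M s (orf a b) ↔ (sat M s a ∨ sat M s b) := by
  simp only [orf, sat_neg, sat_and]; tauto

lemma sat_ifff {s : W} {a b : Form} : sat M s (ifff a b) ↔ (sat M s a ↔ sat M s b) := by
  simp only [ifff, sat_and, sat_imp]; tauto

attribute [local instance] Classical.propDecidable

lemma evalT_sat (s : W) :
    ∀ φ : Form, evalT (fun ψ => decide (sat M s ψ)) φ = true ↔ sat M s φ := by
  intro φ
  induction φ with
  | atom n => simp [evalT_atom]
  | neg a ih =>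
    rw [evalT_neg, sat_neg, ← ih]
    cases evalT (fun ψ => decide (sat M s ψ)) a <;> simp
  | and a b ih1 ih2 => simp [evalT_and, ih1, ih2, sat_and]
  | nabla a ih => simp [evalT_nabla]
  | bull a ih => simp [evalT_bull]

lemma sat_of_taut {s : W} {φ : Form} (h : Taut φ) : sat M s φ :=
  (evalT_sat s φ).1 (h _)

end Soundness

theorem soundness {φ : Form} (h : Prov φ) :
    ∀ (W : Type) (M : Model W) (s : W), sat M s φ := by
  induction h with
  | a0 φ ht => intro W M s; exact sat_of_taut ht
  | a1 φ =>
    intro W M s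
    rw [sat_imp]
    rintro ⟨h1, _⟩; exact h1
  | a2 φ =>
    intro W M s
    rw [sat_ifff]
    constructor
    · rintro ⟨t, u, hrt, hru, h1, h2⟩
      exact ⟨u, t, hru, hrt, h2, fun h' => h' h1⟩
    · rintro ⟨t, u, hrt, hru, h1, h2⟩
      refine ⟨u, t, hru, hrt, ?_, h1⟩
      by_contra h'
      exact h2 h'
  | a3 φ ψ =>
    intro W M s
    rw [sat_imp]
    rintro ⟨⟨h1, t, hrt, ht⟩, h2⟩
    rw [sat_imp] at ht
    push_neg at ht
    exact ⟨h2, t, hrt, ht.2⟩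
  | a4 φ ψ =>
    intro W M s
    rw [sat_imp, sat_orf]
    rintro ⟨t, u, hrt, hru, h1, h2⟩
    rw [sat_and] at h1 h2
    push_neg at h2
    by_cases hφu : sat M u φ
    · exact Or.inr ⟨t, u, hrt, hru, h1.2, h2 hφu⟩
    · exact Or.inl ⟨t, u, hrt, hru, h1.1, hφu⟩
  | a5 φ ψ =>
    intro W M s
    rw [sat_imp, sat_orf]
    rintro ⟨h1, t, hrt, ht⟩
    rw [sat_and] at h1 ht
    push_neg at ht
    by_cases hφt : sat M t φ
    · exact Or.inr ⟨h1.2, t, hrt, ht hφt⟩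
    · exact Or.inl ⟨h1.1, t, hrt, hφt⟩
  | a6 φ =>
    intro W M s
    rw [sat_imp, sat_orf]
    rintro ⟨t, u, hrt, hru, h1, h2⟩
    by_cases hφ : sat M s φ
    · exact Or.inl ⟨hφ, u, hru, h2⟩
    · exact Or.inr ⟨hφ, t, hrt, fun h' => h' h1⟩
  | a7 φ ψ χ =>
    intro W M s
    rw [sat_imp]
    rintro ⟨⟨h1, t, hrt, ht⟩, ⟨h2, u, hru, hu⟩⟩
    rw [sat_imp] at ht hu
    push_neg at ht hu
    exact ⟨t, u, hrt, hru, ht.1, fun h' => hu.1 h'⟩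
  | r1 φ _ ih =>
    intro W M s
    rintro ⟨t, u, _, _, _, h2⟩
    exact h2 (ih W M u)
  | r2 φ _ ih =>
    intro W M s
    rintro ⟨_, t, _, h2⟩
    exact h2 (ih W M t)
  | r3 φ ψ _ ih =>
    intro W M s
    rw [sat_ifff]
    have key : ∀ (w : W), sat M w φ ↔ sat M w ψ := fun w => sat_ifff.1 (ih W M w)
    constructor
    · intro hd hn
      rcases hn with ⟨t, u, hrt, hru, h1, h2⟩
      exact hd ⟨t, u, hrt, hru, (key t).2 h1, fun h' => h2 ((key u).1 h')⟩
    · intro hd hn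
      rcases hn with ⟨t, u, hrt, hru, h1, h2⟩
      exact hd ⟨t, u, hrt, hru, (key t).1 h1, fun h' => h2 ((key u).2 h')⟩
  | r4 φ ψ _ ih =>
    intro W M s
    rw [sat_ifff]
    have key : ∀ (w : W), sat M w φ ↔ sat M w ψ := fun w => sat_ifff.1 (ih W M w)
    constructor
    · intro hd hn
      rcases hn with ⟨h1, t, hrt, h2⟩
      exact hd ⟨(key s).2 h1, t, hrt, fun h' => h2 ((key t).1 h')⟩
    · intro hd hn
      rcases hn with ⟨h1, t, hrt, h2⟩
      exact hd ⟨(key s).1 h1, t, hrt, fun h' => h2 ((key t).2 h')⟩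
  | mp φ ψ _ _ ih1 ih2 =>
    intro W M s
    exact sat_imp.1 (ih1 W M s) (ih2 W M s)

-- § the final theorem
theorem stmt12 :
    (∀ φ : Form, Prov φ →
      ∀ (W : Type) [Nonempty W] (M : Model W) (s : W), sat M s φ) ∧
    (∀ Γ : Set Form, Consistent Γ →
      ∃ (W : Type) (_ : Nonempty W) (M : Model W) (s : W), ∀ φ ∈ Γ, sat M s φ) := by
  constructor
  · intro φ h W _ M s
    exact soundness h W M s
  · intro Γ hΓ
    have hcon : ConS Γ := by
      rintro ⟨L, hLmem, hLP⟩
      rcases L with _ | ⟨a, L⟩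
      · -- the empty list case: `¬ bigAnd []` is not derivable, by soundness
        have hval := soundness hLP Unit ⟨fun _ _ => False, fun _ _ => False⟩ ()
        rw [sat_neg] at hval
        exact hval (by rw [bigAnd]; rw [sat_neg, sat_and]; rintro ⟨h1, h2⟩; exact h2 h1)
      · exact hΓ ⟨a :: L, by simp, hLmem, hLP⟩
    obtain ⟨s, hΓs, hs⟩ := lindenbaum hcon
    refine ⟨CanW, ⟨⟨s, hs⟩⟩, canM, ⟨s, hs⟩, ?_⟩
    intro φ hφ
    exact (truth_lemma φ ⟨s, hs⟩).2 (hΓs hφ)
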